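/- For every n ∈ ℕ, d ∈ [n−1], and k ∈ {d+1, ..., n}, there exists a selection mechanism f mapping loopless directed graphs on [n] with maximum outdegree at most d to subsets of [n] such that: (1) |f(G)| ≤ k for all G; (2) f is impartial, i.e., whether v ∈ f(G) does not depend on the outgoing edges of v; (3) f(G) is nonempty and every selected vertex has indegree at least Δ(G) − 1. -/

import Mathlib

open Finset

abbrev Edges (n : ℕ) := Finset (Fin n × Fin n)

/-- No self-loops. -/
def Loopless {n : ℕ} (E : Edges n) : Prop := ∀ e ∈ E, e.1 ≠ e.2

/-- Indegree of `v`. -/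
def indeg {n : ℕ} (E : Edges n) (v : Fin n) : ℕ :=
  (E.filter (fun e => e.2 = v)).card

/-- Outdegree of `v`. -/
def outdeg {n : ℕ} (E : Edges n) (v : Fin n) : ℕ :=
  (E.filter (fun e => e.1 = v)).card

/-- Maximum indegree Δ(G). -/
def maxIndeg {n : ℕ} (E : Edges n) : ℕ :=
  Finset.univ.sup (indeg E)

/-- Remove all outgoing edges of `v` (the graph `G_v`). -/
def removeOut {n : ℕ} (E : Edges n) (v : Fin n) : Edges n :=
  E.filter (fun e => e.1 ≠ v)

/-- Lexicographic comparison of pairs (indegree, index). -/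
def lexLt {n : ℕ} (E : Edges n) (u v : Fin n) : Prop :=
  indeg E u < indeg E v ∨ (indeg E u = indeg E v ∧ u < v)

/-- `v` is selected by asymmetric plurality with runners-up: `top(G_v) = v`,
i.e. `v` lex-dominates every other vertex in `G_v`. -/
def selected {n : ℕ} (E : Edges n) (v : Fin n) : Prop :=
  ∀ w, w ≠ v → lexLt (removeOut E v) w v

open Classical in
/-- The selected set `P(G)`. -/
noncomputable def P {n : ℕ} (E : Edges n) : Finset (Fin n) :=
  Finset.univ.filter (fun v => selected E v)

lemma indeg_removeOut_le {n : ℕ} (E : Edges n) (v w : Fin n) :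
    indeg (removeOut E v) w ≤ indeg E w := by
  apply card_le_card
  intro e he
  simp only [removeOut, mem_filter] at he ⊢
  tauto

lemma indeg_removeOut_self {n : ℕ} (E : Edges n) (hL : Loopless E) (v : Fin n) :
    indeg (removeOut E v) v = indeg E v := by
  unfold indeg removeOut
  congr 1
  ext e
  simp only [mem_filter]
  constructor
  · tauto
  · rintro ⟨he, h2⟩
    refine ⟨⟨he, ?_⟩, h2⟩
    intro h1
    exact hL e he (h1.trans h2.symm)

lemma indeg_le_removeOut_add_one {n : ℕ} (E : Edges n) (v w : Fin n) :
    indeg E w ≤ indeg (removeOut E v) w + 1 := by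
  have hsub : E.filter (fun e => e.2 = w) ⊆
      insert (v, w) ((removeOut E v).filter (fun e => e.2 = w)) := by
    intro e he
    simp only [removeOut, mem_filter, mem_insert] at he ⊢
    by_cases h : e.1 = v
    · left
      obtain ⟨he1, he2⟩ := he
      cases e
      simp_all
    · right; tauto
  calc indeg E w ≤ _ := card_le_card hsub
    _ ≤ _ := card_insert_le _ _

lemma indeg_removeOut_of_not_mem {n : ℕ} (E : Edges n) {v w : Fin n}
    (h : (v, w) ∉ E) : indeg (removeOut E v) w = indeg E w := by
  unfold indeg removeOut
  congr 1
  ext e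
  simp only [mem_filter]
  constructor
  · tauto
  · rintro ⟨he, h2⟩
    refine ⟨⟨he, ?_⟩, h2⟩
    intro h1
    apply h
    have : e = (v, w) := by cases e; simp_all
    rwa [this] at he

/-- Theorem 1: for d ∈ [n−1] and k ∈ {d+1,…,n}, there is an impartial and
1-min-additive k-selection mechanism on graphs with max outdegree d. -/
theorem stmt_7 {n d k : ℕ} (hd1 : 1 ≤ d) (hd2 : d ≤ n - 1)
    (hk1 : d + 1 ≤ k) (hk2 : k ≤ n) :
    ∃ f : Edges n → Finset (Fin n),
      (∀ E : Edges n, Loopless E → (∀ v, outdeg E v ≤ d) → (f E).card ≤ k) ∧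
      (∀ E E' : Edges n, ∀ v : Fin n,
        Loopless E → (∀ u, outdeg E u ≤ d) →
        Loopless E' → (∀ u, outdeg E' u ≤ d) →
        removeOut E v = removeOut E' v → (v ∈ f E ↔ v ∈ f E')) ∧
      (∀ E : Edges n, Loopless E → (∀ v, outdeg E v ≤ d) →
        (f E).Nonempty ∧ ∀ v ∈ f E, maxIndeg E ≤ indeg E v + 1) := by
  classical
  have hn : 0 < n := by omega
  refine ⟨P, ?_, ?_, ?_⟩
  · -- cardinality bound
    intro E _hL hout
    rcases eq_or_ne (P E) ∅ with h | h
    · simp [h]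
    · obtain ⟨u, hu, hmin⟩ := Finset.exists_min_image (P E)
        (fun x => toLex (indeg E x, x)) (nonempty_of_ne_empty h)
      have husel : selected E u := by
        simp only [P, mem_filter] at hu; exact hu.2
      -- every other selected w has edge (u, w)
      have hedge : ∀ w ∈ (P E).erase u, (u, w) ∈ E := by
        intro w hw
        obtain ⟨hwu, hwP⟩ := Finset.mem_erase.mp hw
        by_contra hno
        have heq := indeg_removeOut_of_not_mem E hno
        have hlt := husel w hwu
        have hself := indeg_removeOut_self E _hL u
        have hkey : toLex (indeg E u, u) < toLex (indeg E w, w) := by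
          apply lt_of_le_of_ne (hmin w hwP)
          intro hc
          exact hwu (congrArg Prod.snd (toLex_inj.mp hc)).symm
        rw [Prod.Lex.lt_iff] at hkey
        rcases hlt with h1 | ⟨h1, h2⟩
        · rw [heq, hself] at h1
          rcases hkey with h3 | ⟨h3, _⟩ <;> simp_all <;> omega
        · rw [heq, hself] at h1
          rcases hkey with h3 | ⟨h3, h4⟩
          · simp only [ofLex_toLex] at h3; omega
          · exact absurd h2 (not_lt_of_gt h4)
      -- so outdeg of u is at least card (P E) - 1
      have hinj : ((P E).erase u).card ≤ outdeg E u := by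
        unfold outdeg
        apply Finset.card_le_card_of_injOn (fun w => (u, w))
        · intro w hw
          simp only [mem_filter]
          exact mem_filter.mpr ⟨hedge w hw, rfl⟩
        · intro a _ b _ hab
          exact (Prod.mk.injEq _ _ _ _ ▸ hab).2
      have := hout u
      have hcard := Finset.card_erase_of_mem hu
      omega
  · -- impartiality
    intro E E' v _ _ _ _ hEE
    simp only [P, mem_filter, mem_univ, true_and]
    unfold selected
    rw [hEE]
  · -- nonempty and min-additive
    intro E hL hout
    constructor
    · obtain ⟨v, _, hmax⟩ := Finset.exists_max_image (univ : Finset (Fin n))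
        (fun x => toLex (indeg E x, x)) (univ_nonempty_iff.mpr ⟨⟨0, hn⟩⟩)
      refine ⟨v, ?_⟩
      simp only [P, mem_filter, mem_univ, true_and]
      intro w hwv
      have hkey : toLex (indeg E w, w) < toLex (indeg E v, v) := by
        apply lt_of_le_of_ne (hmax w (mem_univ w))
        intro hc
        exact hwv (congrArg Prod.snd (toLex_inj.mp hc))
      rw [Prod.Lex.lt_iff] at hkey
      have hself := indeg_removeOut_self E hL v
      have hle := indeg_removeOut_le E v w
      unfold lexLt
      rw [hself]
      rcases hkey with h1 | ⟨h1, h2⟩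
      · left; simp only [ofLex_toLex] at h1; omega
      · rcases lt_or_eq_of_le (hle.trans_eq h1) with h | h
        · left; exact h
        · right; exact ⟨h, h2⟩
    · intro v hv
      simp only [P, mem_filter, mem_univ, true_and] at hv
      unfold maxIndeg
      rw [Finset.sup_le_iff]
      intro w _
      rcases eq_or_ne w v with rfl | hwv
      · omega
      · have hlt := hv w hwv
        have hself := indeg_removeOut_self E hL v
        have h1 := indeg_le_removeOut_add_one E v w
        rcases hlt with h | ⟨h, _⟩ <;> rw [hself] at h <;> omega
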